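/- Assume M has first row (1,0,0,0) and second row (0,c₂₂,c₂₃,c₂₄) with c₂₂, c₂₃, c₂₄ linearly independent over the prime field 𝔽_p of K (equivalently, γ₁₂₄₆ ≠ 0). Then h̃₁ + 2γ₁₂₄₆ x^{p³−1} y^{p³+1} lies in the ideal of K[x,y,z] generated by x^{p³}. (Equivalently, the leading term of h̃₁ with respect to the graded reverse lexicographic order with x < y < z is −2γ₁₂₄₆ x^{p³−1} y^{p³+1}.) -/
import Mathlib


noncomputable section

open MvPolynomial

variable (p : ℕ) (K : Type*) [Field K]

/-- The 10×4 matrix Γ(M) whose rows are the Frobenius twists of the rows of M. -/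
def Gam (M : Matrix (Fin 2) (Fin 4) K) : Matrix (Fin 10) (Fin 4) K :=
  fun i j => M ⟨i.val % 2, by omega⟩ j ^ p ^ (i.val / 2)

/-- γ_{abcd}(M): the determinant of the 4×4 matrix whose rows are rows
a, b, c, d (0-indexed) of Γ(M). -/
def gam (M : Matrix (Fin 2) (Fin 4) K) (a b c d : Fin 10) : K :=
  (Matrix.of ![Gam p K M a, Gam p K M b, Gam p K M c, Gam p K M d]).det

/-- δ = y² − xz. -/
def del : MvPolynomial (Fin 3) K := X 1 ^ 2 - X 0 * X 2

/-- The action of the element (n₁,…,n₄) ∈ E = (ℤ/pℤ)⁴ on K[x,y,z]: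
x ↦ x, y ↦ y + a·x, z ↦ z + 2a·y + (a²+b)·x where a = Σ nⱼ c₁ⱼ and b = Σ nⱼ c₂ⱼ. -/
def act [CharP K p] (M : Matrix (Fin 2) (Fin 4) K) (n : Fin 4 → ZMod p) :
    MvPolynomial (Fin 3) K →ₐ[K] MvPolynomial (Fin 3) K :=
  aeval ![X 0,
    X 1 + C (∑ j, (ZMod.castHom (dvd_refl p) K) (n j) * M 0 j) * X 0,
    X 2 + C (2 * ∑ j, (ZMod.castHom (dvd_refl p) K) (n j) * M 0 j) * X 1
        + C ((∑ j, (ZMod.castHom (dvd_refl p) K) (n j) * M 0 j) ^ 2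
             + ∑ j, (ZMod.castHom (dvd_refl p) K) (n j) * M 1 j) * X 0]

/-- The invariant ring K[x,y,z]^E, as a set of polynomials. -/
def invariants [CharP K p] (M : Matrix (Fin 2) (Fin 4) K) : Set (MvPolynomial (Fin 3) K) :=
  {f | ∀ n : Fin 4 → ZMod p, act p K M n f = f}

/-- N_M(f): the product of the distinct elements of the E-orbit of f. -/
def NM [CharP K p] [NeZero p] (M : Matrix (Fin 2) (Fin 4) K) (f : MvPolynomial (Fin 3) K) :
    MvPolynomial (Fin 3) K :=
  letI : DecidableEq (MvPolynomial (Fin 3) K) := Classical.decEq _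
  (Finset.image (fun n : Fin 4 → ZMod p => act p K M n f) Finset.univ).prod id

/-- f₁₂₄₆₈ = −γ₁₂₄₆ δ^{p³} + γ₁₂₄₈ δ^{p²} x^{2p³−2p²} − γ₁₂₆₈ δ^p x^{2p³−2p}
           + γ₁₄₆₈ δ x^{2p³−2} + γ₂₄₆₈ y x^{2p³−1}. -/
def f12468 (M : Matrix (Fin 2) (Fin 4) K) : MvPolynomial (Fin 3) K :=
  - (C (gam p K M 0 1 3 5) * del K ^ p ^ 3)
  + C (gam p K M 0 1 3 7) * del K ^ p ^ 2 * X 0 ^ (2 * p ^ 3 - 2 * p ^ 2)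
  - C (gam p K M 0 1 5 7) * del K ^ p * X 0 ^ (2 * p ^ 3 - 2 * p)
  + C (gam p K M 0 3 5 7) * del K * X 0 ^ (2 * p ^ 3 - 2)
  + C (gam p K M 1 3 5 7) * X 1 * X 0 ^ (2 * p ^ 3 - 1)

/-- h̃₁ = f₁₂₄₆₈ + γ₁₂₄₆·((y^p − y x^{p−1})^{2p²} + 2(y^p − y x^{p−1})^{p²+p} x^{p³−p²}
        + 2(y^p − y x^{p−1})^{p²+1} x^{p³−p}). -/
def h1t (M : Matrix (Fin 2) (Fin 4) K) : MvPolynomial (Fin 3) K :=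
  f12468 p K M
  + C (gam p K M 0 1 3 5)
      * ((X 1 ^ p - X 1 * X 0 ^ (p - 1)) ^ (2 * p ^ 2)
        + 2 * (X 1 ^ p - X 1 * X 0 ^ (p - 1)) ^ (p ^ 2 + p) * X 0 ^ (p ^ 3 - p ^ 2)
        + 2 * (X 1 ^ p - X 1 * X 0 ^ (p - 1)) ^ (p ^ 2 + 1) * X 0 ^ (p ^ 3 - p))

/-- Section 10: assume M has first row (1,0,0,0) and second row (0,c₂₂,c₂₃,c₂₄) with
c₂₂, c₂₃, c₂₄ linearly independent over 𝔽_p.  Then h̃₁ + 2γ₁₂₄₆ x^{p³−1} y^{p³+1} lies in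
the ideal generated by x^{p³}.  (Equivalently, LT(h̃₁) = −2γ₁₂₄₆ x^{p³−1} y^{p³+1} in
grevlex with x < y < z.) -/
theorem lt_h1tilde [Fact p.Prime] (hodd : Odd p) [CharP K p]
    (M : Matrix (Fin 2) (Fin 4) K)
    (hrow1 : M 0 = ![1, 0, 0, 0]) (hM10 : M 1 0 = 0)
    (hindep : ∀ n : Fin 3 → ZMod p,
      ∑ j, (ZMod.castHom (dvd_refl p) K) (n j) * M 1 j.succ = 0 → n = 0) :
    h1t p K M
      + C (2 * gam p K M 0 1 3 5) * X 0 ^ (p ^ 3 - 1) * X 1 ^ (p ^ 3 + 1)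
      ∈ Ideal.span {(X 0 : MvPolynomial (Fin 3) K) ^ p ^ 3} := by
  have hp3 : 3 ≤ p := by
    have h2 := (Fact.out : p.Prime).two_le
    obtain ⟨k, hk⟩ := hodd
    omega
  obtain ⟨a, rfl⟩ : ∃ a, p = a + 3 := ⟨p - 3, by omega⟩
  rw [Ideal.mem_span_singleton]
  refine ⟨C (gam (a+3) K M 0 1 3 7) * (X 1 ^ 2 - X 0 * X 2) ^ ((a+3)^2)
        * X 0 ^ (a^3+7*a^2+15*a+9)
      - C (gam (a+3) K M 0 1 5 7) * (X 1 ^ 2 - X 0 * X 2) ^ (a+3)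
        * X 0 ^ (a^3+9*a^2+25*a+21)
      + C (gam (a+3) K M 0 3 5 7) * (X 1 ^ 2 - X 0 * X 2)
        * X 0 ^ (a^3+9*a^2+27*a+25)
      + C (gam (a+3) K M 1 3 5 7) * X 1 * X 0 ^ (a^3+9*a^2+27*a+26)
      + C (gam (a+3) K M 0 1 3 5)
        * (X 2 ^ ((a+3)^3) - X 1 ^ (2*(a+3)^2) * X 0 ^ (a^3+7*a^2+15*a+9)
           + 2 * X 1 ^ ((a+3)^2+1) * X 0 ^ (a^3+8*a^2+21*a+17)), ?_⟩
  simp only [h1t, f12468, del]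
  have e0 : a + 3 - 1 = a + 2 := by omega
  have e1 : 2*(a+3)^3 - 2*(a+3)^2 = 2*a^3+16*a^2+42*a+36 :=
    Nat.sub_eq_of_eq_add (by ring)
  have e2 : 2*(a+3)^3 - 2*(a+3) = 2*a^3+18*a^2+52*a+48 :=
    Nat.sub_eq_of_eq_add (by ring)
  have e3 : 2*(a+3)^3 - 2 = 2*a^3+18*a^2+54*a+52 :=
    Nat.sub_eq_of_eq_add (by ring)
  have e4 : 2*(a+3)^3 - 1 = 2*a^3+18*a^2+54*a+53 :=
    Nat.sub_eq_of_eq_add (by ring)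
  have e5 : (a+3)^3 - (a+3)^2 = a^3+8*a^2+21*a+18 :=
    Nat.sub_eq_of_eq_add (by ring)
  have e6 : (a+3)^3 - (a+3) = a^3+9*a^2+26*a+24 :=
    Nat.sub_eq_of_eq_add (by ring)
  have e7 : (a+3)^3 - 1 = a^3+9*a^2+27*a+26 :=
    Nat.sub_eq_of_eq_add (by ring)
  rw [e0, e1, e2, e3, e4, e5, e6, e7]
  have s1 : (X 1 ^ (a+3) - X 1 * X 0 ^ (a+2) : MvPolynomial (Fin 3) K) ^ (2*(a+3)^2)
      = ((X 1 ^ (a+3) - X 1 * X 0 ^ (a+2)) ^ ((a+3)^2)) ^ 2 := pow_mul' _ _ _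
  have s2 : (X 1 ^ (a+3) - X 1 * X 0 ^ (a+2) : MvPolynomial (Fin 3) K) ^ ((a+3)^2+(a+3))
      = (X 1 ^ (a+3) - X 1 * X 0 ^ (a+2)) ^ ((a+3)^2)
        * (X 1 ^ (a+3) - X 1 * X 0 ^ (a+2)) ^ (a+3) := pow_add _ _ _
  have s3 : (X 1 ^ (a+3) - X 1 * X 0 ^ (a+2) : MvPolynomial (Fin 3) K) ^ ((a+3)^2+1)
      = (X 1 ^ (a+3) - X 1 * X 0 ^ (a+2)) ^ ((a+3)^2)
        * (X 1 ^ (a+3) - X 1 * X 0 ^ (a+2)) := pow_succ _ _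
  have hA : (X 1 ^ (a+3) - X 1 * X 0 ^ (a+2) : MvPolynomial (Fin 3) K) ^ ((a+3)^2)
      = (X 1 ^ (a+3)) ^ ((a+3)^2) - (X 1 * X 0 ^ (a+2)) ^ ((a+3)^2) := by
    have := sub_pow_char_pow (R := MvPolynomial (Fin 3) K) (p := a+3)
      (x := X 1 ^ (a+3)) (y := X 1 * X 0 ^ (a+2)) (n := 2)
    simpa using this
  have hB : (X 1 ^ (a+3) - X 1 * X 0 ^ (a+2) : MvPolynomial (Fin 3) K) ^ (a+3)
      = (X 1 ^ (a+3)) ^ (a+3) - (X 1 * X 0 ^ (a+2)) ^ (a+3) :=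
    sub_pow_char (R := MvPolynomial (Fin 3) K) (p := a+3) _ _
  have hD : (X 1 ^ 2 - X 0 * X 2 : MvPolynomial (Fin 3) K) ^ ((a+3)^3)
      = (X 1 ^ 2) ^ ((a+3)^3) - (X 0 * X 2) ^ ((a+3)^3) := by
    have := sub_pow_char_pow (R := MvPolynomial (Fin 3) K) (p := a+3)
      (x := X 1 ^ 2) (y := X 0 * X 2) (n := 3)
    simpa using this
  rw [s1, s2, s3, hA, hB, hD, C_mul]
  rw [show (C 2 : MvPolynomial (Fin 3) K) = 2 from map_ofNat _ 2]
  ring
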